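/- Let w, c₁, c₂ > 0, set λ = √( w(c₁ + c₂)/(2c₁c₂) ), and suppose r ≥ (c₁² + c₂²)/(c₁ + c₂)² + w/(2(c₁ + c₂)) − (c₁ − c₂)²/(2(c₁ + c₂)²·cosh(λ)). For a square-integrable function f on [0,1] and i ∈ {1,2}, define Jᵢ(f) = ∫₀¹ ( r·f(α) − f(α)²/2 − (w/(2cᵢ))·( ∫_α¹ f(t) dt )² ) dα. Define f̃₁(α) = (c₂ − c₁)/(2(c₁ + c₂)) · cosh(λ(1−α))/cosh(λ) + c₁/(c₁ + c₂) and f̃₂(α) = 1 − f̃₁(α). Then 0 ≤ f̃₁(α) ≤ 1 for all α ∈ [0,1], and for every pair of square-integrable functions f₁, f₂ : ℝ → ℝ on [0,1] with f₁ ≥ 0, f₂ ≥ 0 and f₁ + f₂ ≤ 1 almost everywhere on [0,1], one has J₁(f₁) + J₂(f₂) ≤ J₁(f̃₁) + J₂(f̃₂). -/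

import Mathlib

/-!
Each welfare functional `J_c(f) = ∫ (r f - f² / 2 - w / (2c) (∫_α^1 f)²)` is concave, so it lies
below its tangent at the candidate `g`: `J_c(f) ≤ J_c(g) + ∫ ∇J_c(g) (f - g)`, where, after
exchanging the order of integration in the cross term of `(∫_α^1 f)²`, the gradient is
`∇J_c(g)(t) = r - g(t) - (w/c) ∫_0^t ∫_s^1 g`. For the cosh profiles `f̃₁, f̃₂` both gradients
equal one explicit function `P`, decreasing in `t`, and the lower bound on `r` says `P(1) ≥ 0`.
Since `f̃₁ + f̃₂ = 1`, adding the two tangent inequalities bounds the welfare gain of any feasible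
pair by `∫ P (f₁ + f₂ - 1) ≤ 0`. Feasibility of `f̃₁` holds because it is a convex combination
of `1 / 2` and `c₁ / (c₁ + c₂)`.
-/

open MeasureTheory Set

theorem intervalIntegral_mul_integral_swap {a b : ℝ} (hab : a ≤ b) {g h : ℝ → ℝ}
    (hg : IntegrableOn g (Ioc a b)) (hh : IntegrableOn h (Ioc a b)) :
    ∫ x in a..b, g x * ∫ y in x..b, h y = ∫ y in a..b, (∫ x in a..y, g x) * h y := by
  set μ := volume.restrict (Ioc a b)
  have hF : Integrable (Function.uncurry fun x y => (Ioi x).indicator (fun y => g x * h y) y)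
      (μ.prod μ) :=
    (hg.mul_prod hh).indicator (s := {p : ℝ × ℝ | p.1 < p.2})
      (measurableSet_lt measurable_fst measurable_snd) |>.congr <| .of_forall fun p => by
        simp [indicator_apply, Function.uncurry]
  rw [intervalIntegral.integral_of_le hab, intervalIntegral.integral_of_le hab]
  convert integral_integral_swap hF using 1
  · refine setIntegral_congr_fun measurableSet_Ioc fun x hx => ?_
    rw [integral_indicator measurableSet_Ioi, Measure.restrict_restrict measurableSet_Ioi,
      inter_comm, Ioc_inter_Ioi, sup_of_le_right hx.1.le, integral_const_mul,
      intervalIntegral.integral_of_le hx.2]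
  · refine setIntegral_congr_fun measurableSet_Ioc fun y hy => ?_
    have hset : Iio y ∩ Ioc a b = Ioo a y := by
      ext x
      simp only [mem_inter_iff, mem_Iio, mem_Ioc, mem_Ioo]
      exact ⟨fun hx => ⟨hx.2.1, hx.1⟩, fun hx => ⟨hx.2, hx.1, hx.2.le.trans hy.2⟩⟩
    have hind : (fun x => (Ioi x).indicator (fun y => g x * h y) y)
        = (Iio y).indicator fun x => g x * h y := by
      ext x; simp [indicator_apply]
    rw [hind, integral_indicator measurableSet_Iio, Measure.restrict_restrict measurableSet_Iio,
      hset, integral_mul_const, ← integral_Ioc_eq_integral_Ioo,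
      intervalIntegral.integral_of_le hy.1.le]

theorem continuousOn_intervalIntegral_left {a b : ℝ} {f : ℝ → ℝ} (hab : a ≤ b)
    (hf : IntegrableOn f (Icc a b)) : ContinuousOn (fun x => ∫ t in x..b, f t) (Icc a b) := by
  rw [← uIcc_of_le hab] at hf ⊢
  exact intervalIntegral.continuousOn_primitive_interval_left hf

theorem continuousOn_intervalIntegral_intervalIntegral_left {a b : ℝ} {f : ℝ → ℝ} (hab : a ≤ b)
    (hf : IntegrableOn f (Icc a b)) :
    ContinuousOn (fun x => ∫ s in a..x, ∫ t in s..b, f t) (Icc a b) := by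
  rw [← uIcc_of_le hab]
  refine intervalIntegral.continuousOn_primitive_interval ?_
  rw [uIcc_of_le hab]
  exact (continuousOn_intervalIntegral_left hab hf).integrableOn_Icc

noncomputable def welfare (r κ : ℝ) (f : ℝ → ℝ) : ℝ :=
  ∫ α in (0 : ℝ)..1, (r * f α - f α ^ 2 / 2 - κ * (∫ t in α..1, f t) ^ 2)

noncomputable def welfareGradient (r κ : ℝ) (g : ℝ → ℝ) (t : ℝ) : ℝ :=
  r - g t - 2 * κ * ∫ s in (0 : ℝ)..t, ∫ u in s..1, g u

section Welfare

variable {r κ : ℝ} {f g h : ℝ → ℝ}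

theorem continuousOn_welfareGradient (hg : ContinuousOn g (Icc 0 1)) :
    ContinuousOn (welfareGradient r κ g) (Icc 0 1) :=
  (continuousOn_const.sub hg).sub <| continuousOn_const.mul <|
    continuousOn_intervalIntegral_intervalIntegral_left zero_le_one hg.integrableOn_Icc

theorem integral_welfareGradient_mul (hg : ContinuousOn g (Icc 0 1))
    (hh : IntegrableOn h (Icc 0 1)) :
    ∫ t in (0 : ℝ)..1, welfareGradient r κ g t * h t
      = ∫ α in (0 : ℝ)..1, ((r - g α) * h α
          - 2 * κ * ((∫ t in α..1, g t) * ∫ t in α..1, h t)) := by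
  have hI : uIcc (0 : ℝ) 1 = Icc 0 1 := uIcc_of_le zero_le_one
  have hh' : IntervalIntegrable h volume 0 1 :=
    (intervalIntegrable_iff_integrableOn_Icc_of_le zero_le_one).2 hh
  have hG := continuousOn_intervalIntegral_left zero_le_one hg.integrableOn_Icc
  have hlin : IntervalIntegrable (fun t => (r - g t) * h t) volume 0 1 :=
    hh'.continuousOn_mul (hI ▸ continuousOn_const.sub hg)
  have hQh : IntervalIntegrable (fun t => (∫ s in (0 : ℝ)..t, ∫ u in s..1, g u) * h t) volume 0 1 :=
    hh'.continuousOn_mul (hI ▸ continuousOn_intervalIntegral_intervalIntegral_left zero_le_one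
      hg.integrableOn_Icc)
  have hGH : IntervalIntegrable (fun α => (∫ t in α..1, g t) * ∫ t in α..1, h t) volume 0 1 :=
    (hG.mul (continuousOn_intervalIntegral_left zero_le_one hh)).intervalIntegrable_of_Icc
      zero_le_one
  rw [intervalIntegral.integral_sub hlin (hGH.const_mul _), intervalIntegral.integral_const_mul,
    intervalIntegral_mul_integral_swap zero_le_one
      (hG.integrableOn_Icc.mono_set Ioc_subset_Icc_self) (hh.mono_set Ioc_subset_Icc_self),
    ← intervalIntegral.integral_const_mul, ← intervalIntegral.integral_sub hlin (hQh.const_mul _)]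
  refine intervalIntegral.integral_congr fun t _ => ?_
  simp only [welfareGradient]
  ring

theorem welfare_le_add_integral_welfareGradient_mul (hκ : 0 ≤ κ)
    (hf : MemLp f 2 (volume.restrict (Icc 0 1))) (hg : ContinuousOn g (Icc 0 1)) :
    welfare r κ f ≤ welfare r κ g + ∫ t in (0 : ℝ)..1, welfareGradient r κ g t * (f t - g t) := by
  have hfi : IntegrableOn f (Icc 0 1) := hf.integrable one_le_two
  have hhi : IntegrableOn (fun t => f t - g t) (Icc 0 1) := hfi.sub hg.integrableOn_Icc
  set G := fun α => ∫ t in α..1, g t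
  set H := fun α => ∫ t in α..1, (f t - g t)
  have hG : ContinuousOn G (Icc 0 1) :=
    continuousOn_intervalIntegral_left zero_le_one hg.integrableOn_Icc
  have htail : ∀ α ∈ Icc (0 : ℝ) 1, ∫ t in α..1, f t = G α + H α := fun α hα => by
    have hsub : uIcc α 1 ⊆ Icc 0 1 := by rw [uIcc_of_le hα.2]; exact Icc_subset_Icc_left hα.1
    show _ = _ + ∫ t in α..1, (f t - g t)
    rw [intervalIntegral.integral_sub ((hfi.mono_set hsub).intervalIntegrable)
      ((hg.integrableOn_Icc.mono_set hsub).intervalIntegrable)]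
    ring
  have hint : ∀ {u : ℝ → ℝ}, IntegrableOn u (Icc 0 1) → IntervalIntegrable u volume 0 1 :=
    (intervalIntegrable_iff_integrableOn_Icc_of_le zero_le_one).2
  have hf₀ : IntervalIntegrable (fun α => r * f α - f α ^ 2 / 2 - κ * (∫ t in α..1, f t) ^ 2)
      volume 0 1 :=
    (((hint hfi).const_mul r).sub ((hint hf.integrable_sq).div_const 2)).sub <|
      (continuousOn_const.mul ((continuousOn_intervalIntegral_left zero_le_one hfi).pow 2))
        |>.intervalIntegrable_of_Icc zero_le_one
  have hg₀ : IntervalIntegrable (fun α => r * g α - g α ^ 2 / 2 - κ * G α ^ 2) volume 0 1 :=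
    (((continuousOn_const.mul hg).sub ((hg.pow 2).div_const 2)).sub
      (continuousOn_const.mul (hG.pow 2))).intervalIntegrable_of_Icc zero_le_one
  have hlin : IntervalIntegrable
      (fun α => (r - g α) * (f α - g α) - 2 * κ * (G α * H α)) volume 0 1 :=
    ((hint hhi).continuousOn_mul ((uIcc_of_le (zero_le_one' ℝ)) ▸ continuousOn_const.sub hg)).sub
      (((hG.mul (continuousOn_intervalIntegral_left zero_le_one hhi)).intervalIntegrable_of_Icc
        zero_le_one).const_mul _)
  rw [integral_welfareGradient_mul hg hhi, welfare, welfare,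
    ← intervalIntegral.integral_add hg₀ hlin]
  refine intervalIntegral.integral_mono_on zero_le_one hf₀ (hg₀.add hlin) fun α hα => ?_
  rw [htail α hα]
  -- the dropped second-order term `-(f - g) ^ 2 / 2 - κ * H ^ 2` is nonpositive
  nlinarith [sq_nonneg (f α - g α), mul_nonneg hκ (sq_nonneg (H α))]

theorem welfare_add_welfare_le_of_welfareGradient_eq {κ₁ κ₂ : ℝ} (hκ₁ : 0 ≤ κ₁) (hκ₂ : 0 ≤ κ₂)
    {f₁ f₂ g₁ g₂ : ℝ → ℝ} (hf₁ : MemLp f₁ 2 (volume.restrict (Icc 0 1)))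
    (hf₂ : MemLp f₂ 2 (volume.restrict (Icc 0 1)))
    (hf : ∀ᵐ t ∂(volume.restrict (Icc 0 1)), f₁ t + f₂ t ≤ 1)
    (hg₁ : ContinuousOn g₁ (Icc 0 1)) (hg₂ : ContinuousOn g₂ (Icc 0 1))
    (hg : ∀ t ∈ Icc (0 : ℝ) 1, g₁ t + g₂ t = 1)
    (hgrad : ∀ t ∈ Icc (0 : ℝ) 1, welfareGradient r κ₁ g₁ t = welfareGradient r κ₂ g₂ t)
    (hgrad_nonneg : ∀ t ∈ Icc (0 : ℝ) 1, 0 ≤ welfareGradient r κ₁ g₁ t) :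
    welfare r κ₁ f₁ + welfare r κ₂ f₂ ≤ welfare r κ₁ g₁ + welfare r κ₂ g₂ := by
  have hint : ∀ {κ : ℝ} {f g : ℝ → ℝ}, MemLp f 2 (volume.restrict (Icc 0 1)) →
      ContinuousOn g (Icc 0 1) →
      IntervalIntegrable (fun t => welfareGradient r κ g t * (f t - g t)) volume 0 1 :=
    fun hf hg => ((intervalIntegrable_iff_integrableOn_Icc_of_le zero_le_one).2
      ((hf.integrable one_le_two).sub hg.integrableOn_Icc)).continuousOn_mul
      (uIcc_of_le (zero_le_one' ℝ) ▸ continuousOn_welfareGradient hg)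
  have hsum : (∫ t in (0 : ℝ)..1, welfareGradient r κ₁ g₁ t * (f₁ t - g₁ t))
      + ∫ t in (0 : ℝ)..1, welfareGradient r κ₂ g₂ t * (f₂ t - g₂ t) ≤ 0 := by
    rw [← intervalIntegral.integral_add (hint hf₁ hg₁) (hint hf₂ hg₂)]
    refine (intervalIntegral.integral_mono_ae_restrict zero_le_one
      ((hint hf₁ hg₁).add (hint hf₂ hg₂)) intervalIntegrable_const ?_).trans_eq
      intervalIntegral.integral_zero
    filter_upwards [hf, ae_restrict_mem measurableSet_Icc] with t ht htI
    have hP := hgrad_nonneg t htI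
    rw [← hgrad t htI]
    nlinarith [hg t htI]
  linarith [welfare_le_add_integral_welfareGradient_mul (r := r) hκ₁ hf₁ hg₁,
    welfare_le_add_integral_welfareGradient_mul (r := r) hκ₂ hf₂ hg₂]

end Welfare

noncomputable def coshProfile (lam A a α : ℝ) : ℝ :=
  A * (Real.cosh (lam * (1 - α)) / Real.cosh lam) + a

section CoshProfile

variable {lam : ℝ}

theorem continuous_coshProfile (A a : ℝ) : Continuous (coshProfile lam A a) := by
  unfold coshProfile; fun_prop

theorem integral_coshProfile (hlam : lam ≠ 0) (A a α : ℝ) :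
    ∫ t in α..1, coshProfile lam A a t
      = A / (lam * Real.cosh lam) * Real.sinh (lam * (1 - α)) + a * (1 - α) := by
  have hderiv : ∀ t, HasDerivAt
      (fun t => -(A / (lam * Real.cosh lam)) * Real.sinh (lam * (1 - t)) + a * t)
      (coshProfile lam A a t) t := fun t => by
    refine (((((hasDerivAt_id t).const_sub 1).const_mul lam).sinh.const_mul _).add
      ((hasDerivAt_id t).const_mul a)).congr_deriv ?_
    simp only [coshProfile, id]
    field_simp
  rw [intervalIntegral.integral_eq_sub_of_hasDerivAt (fun t _ => hderiv t)
    ((continuous_coshProfile A a).intervalIntegrable _ _)]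
  simp only [sub_self, mul_zero, Real.sinh_zero]
  ring

theorem integral_integral_coshProfile (hlam : lam ≠ 0) (A a t : ℝ) :
    ∫ s in (0 : ℝ)..t, ∫ u in s..1, coshProfile lam A a u
      = A / (lam ^ 2 * Real.cosh lam) * (Real.cosh lam - Real.cosh (lam * (1 - t)))
        + a * (t - t ^ 2 / 2) := by
  simp only [integral_coshProfile hlam]
  have hderiv : ∀ s, HasDerivAt
      (fun s => -(A / (lam ^ 2 * Real.cosh lam)) * Real.cosh (lam * (1 - s)) + a * (s - s ^ 2 / 2))
      (A / (lam * Real.cosh lam) * Real.sinh (lam * (1 - s)) + a * (1 - s)) s := fun s => by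
    refine (((((hasDerivAt_id s).const_sub 1).const_mul lam).cosh.const_mul _).add
      (((hasDerivAt_id s).sub ((hasDerivAt_pow 2 s).div_const 2)).const_mul a)).congr_deriv ?_
    simp only [id]
    field_simp
    ring
  rw [intervalIntegral.integral_eq_sub_of_hasDerivAt (fun s _ => hderiv s)
    (by apply Continuous.intervalIntegrable; fun_prop)]
  simp only [sub_zero, mul_one]
  ring

theorem welfareGradient_coshProfile {w c c' : ℝ} (hc : 0 < c) (hc' : 0 < c') (hlam : lam ≠ 0)
    (hlam_sq : lam ^ 2 = w * (c + c') / (2 * c * c')) (r t : ℝ) :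
    welfareGradient r (w / (2 * c)) (coshProfile lam ((c' - c) / (2 * (c + c'))) (c / (c + c'))) t
      = r - (c ^ 2 + c' ^ 2) / (c + c') ^ 2
        + (c - c') ^ 2 / (2 * (c + c') ^ 2) * (Real.cosh (lam * (1 - t)) / Real.cosh lam)
        - w / (c + c') * (t - t ^ 2 / 2) := by
  have hw : w = 2 * c * c' * lam ^ 2 / (c + c') := by
    rw [hlam_sq]; field_simp
  rw [welfareGradient, integral_integral_coshProfile hlam, coshProfile, hw]
  field_simp
  ring

theorem cosh_mul_one_sub_le_cosh (lam : ℝ) {α : ℝ} (hα : α ∈ Icc (0 : ℝ) 1) :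
    Real.cosh (lam * (1 - α)) ≤ Real.cosh lam := by
  rw [Real.cosh_le_cosh, abs_mul]
  exact mul_le_of_le_one_right (abs_nonneg _) (abs_le.2 ⟨by linarith [hα.2], by linarith [hα.1]⟩)

theorem coshProfile_mem_Icc {c c' α : ℝ} (hc : 0 < c) (hc' : 0 < c') (hα : α ∈ Icc (0 : ℝ) 1) :
    coshProfile lam ((c' - c) / (2 * (c + c'))) (c / (c + c')) α ∈ Icc (0 : ℝ) 1 := by
  have hρ : Real.cosh (lam * (1 - α)) / Real.cosh lam ≤ 1 :=
    (div_le_one (Real.cosh_pos lam)).2 (cosh_mul_one_sub_le_cosh lam hα)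
  have hρ₀ : 0 ≤ Real.cosh (lam * (1 - α)) / Real.cosh lam := by positivity
  have ha : c / (c + c') ≤ 1 := (div_le_one (by positivity)).2 (by linarith)
  have ha₀ : 0 ≤ c / (c + c') := by positivity
  have hconv : ∀ ρ : ℝ, (c' - c) / (2 * (c + c')) * ρ + c / (c + c')
      = ρ * (1 / 2) + (1 - ρ) * (c / (c + c')) := fun ρ => by field_simp; ring
  rw [coshProfile, hconv]
  constructor <;> nlinarith

end CoshProfile

/-- Hotelling model with uniform sensitivity, complete-service case: the pair
`(f̃₁, f̃₂)` is feasible and maximizes the total welfare `J₁(f₁) + J₂(f₂)` among all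
nonnegative square-integrable pairs with `f₁ + f₂ ≤ 1` a.e. on `[0,1]`. -/
theorem hotelling_uniform_complete_service
    (r w c₁ c₂ : ℝ) (hw : 0 < w) (hc₁ : 0 < c₁) (hc₂ : 0 < c₂)
    (lam : ℝ) (hlam : lam = Real.sqrt (w * (c₁ + c₂) / (2 * c₁ * c₂)))
    (hr : (c₁ ^ 2 + c₂ ^ 2) / (c₁ + c₂) ^ 2 + w / (2 * (c₁ + c₂))
      - (c₁ - c₂) ^ 2 / (2 * (c₁ + c₂) ^ 2 * Real.cosh lam) ≤ r)
    (J : ℝ → (ℝ → ℝ) → ℝ)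
    (hJ : ∀ (cc : ℝ) (f : ℝ → ℝ), J cc f = ∫ α in (0 : ℝ)..1,
      (r * f α - (f α) ^ 2 / 2 - (w / (2 * cc)) * (∫ t in α..1, f t) ^ 2))
    (ftilde₁ ftilde₂ : ℝ → ℝ)
    (hf1 : ∀ α, ftilde₁ α =
      (c₂ - c₁) / (2 * (c₁ + c₂)) * (Real.cosh (lam * (1 - α)) / Real.cosh lam)
        + c₁ / (c₁ + c₂))
    (hf2 : ∀ α, ftilde₂ α = 1 - ftilde₁ α) :
    (∀ α ∈ Set.Icc (0 : ℝ) 1, 0 ≤ ftilde₁ α ∧ ftilde₁ α ≤ 1) ∧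
    (∀ f₁ f₂ : ℝ → ℝ,
      MemLp f₁ 2 (volume.restrict (Set.Icc (0 : ℝ) 1)) →
      MemLp f₂ 2 (volume.restrict (Set.Icc (0 : ℝ) 1)) →
      (∀ᵐ α ∂(volume.restrict (Set.Icc (0 : ℝ) 1)),
        0 ≤ f₁ α ∧ 0 ≤ f₂ α ∧ f₁ α + f₂ α ≤ 1) →
      J c₁ f₁ + J c₂ f₂ ≤ J c₁ ftilde₁ + J c₂ ftilde₂) := by
  have hlam_pos : 0 < lam := hlam ▸ Real.sqrt_pos.2 (by positivity)
  have hlam_sq : lam ^ 2 = w * (c₁ + c₂) / (2 * c₁ * c₂) := hlam ▸ Real.sq_sqrt (by positivity)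
  have hft₁ : ftilde₁ = coshProfile lam ((c₂ - c₁) / (2 * (c₁ + c₂))) (c₁ / (c₁ + c₂)) :=
    funext hf1
  have hft₂ : ftilde₂ = coshProfile lam ((c₁ - c₂) / (2 * (c₂ + c₁))) (c₂ / (c₂ + c₁)) :=
    funext fun α => by rw [hf2, hf1, coshProfile]; field_simp; ring
  refine ⟨fun α hα => hft₁ ▸ coshProfile_mem_Icc hc₁ hc₂ hα, fun f₁ f₂ hf₁ hf₂ hfeas => ?_⟩
  have hgrad₁ := welfareGradient_coshProfile hc₁ hc₂ hlam_pos.ne' hlam_sq r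
  have hgrad₂ := welfareGradient_coshProfile hc₂ hc₁ hlam_pos.ne' (by rw [hlam_sq]; ring) r
  have hJw : ∀ c f, J c f = welfare r (w / (2 * c)) f := hJ
  rw [hJw, hJw, hJw, hJw, hft₁, hft₂]
  refine welfare_add_welfare_le_of_welfareGradient_eq (by positivity) (by positivity) hf₁ hf₂
    (hfeas.mono fun _ h => h.2.2) (continuous_coshProfile _ _).continuousOn
    (continuous_coshProfile _ _).continuousOn (fun t _ => ?_)
    (fun t _ => by rw [hgrad₁, hgrad₂]; ring) (fun t _ => ?_)
  · simp only [coshProfile]; field_simp; ring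
  have hcosh_ratio : (c₁ - c₂) ^ 2 / (2 * (c₁ + c₂) ^ 2 * Real.cosh lam)
      ≤ (c₁ - c₂) ^ 2 / (2 * (c₁ + c₂) ^ 2) * (Real.cosh (lam * (1 - t)) / Real.cosh lam) := by
    rw [div_mul_div_comm]
    gcongr
    exact le_mul_of_one_le_right (sq_nonneg _) (Real.one_le_cosh _)
  have hquad : w / (c₁ + c₂) * (t - t ^ 2 / 2) ≤ w / (2 * (c₁ + c₂)) := by
    rw [show w / (2 * (c₁ + c₂)) = w / (c₁ + c₂) * (1 / 2) by field_simp]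
    gcongr
    nlinarith [sq_nonneg (1 - t)]
  rw [hgrad₁]
  linarith
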